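/- Let G be a group and A, B ≤ G. Suppose {gᵢ} ⊆ G is such that the subgroups {B^{gᵢ}} contain a representative of every N_G(A)-conjugacy class of conjugates B^g that are contained in A. Then the subgroups {A^{gᵢ⁻¹}} contain a representative of every N_G(B)-conjugacy class of conjugates A^g that contain B. -/

import Mathlib

/-! If `B ≤ A^x` then `B^{x⁻¹} ≤ A`, so by hypothesis `B^{x⁻¹n} = B^{gᵢ}` with `n ∈ N_G(A)`.
Hence `m = x⁻¹ n gᵢ⁻¹` normalizes `B`, and `A^{xm} = A^{n gᵢ⁻¹} = A^{gᵢ⁻¹}` because `n`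
normalizes `A`. -/

namespace Subgroup

variable {G : Type*} [Group G]

theorem map_conj_mul (K : Subgroup G) (a b : G) :
    K.map (MulAut.conj (a * b)).toMonoidHom
      = (K.map (MulAut.conj b).toMonoidHom).map (MulAut.conj a).toMonoidHom := by
  rw [map_map, map_mul]
  rfl

theorem map_conj_one (K : Subgroup G) : K.map (MulAut.conj (1 : G)).toMonoidHom = K := by
  rw [map_one]
  exact map_id K

theorem map_conj_eq_map_conj_iff (K : Subgroup G) (a b : G) :
    K.map (MulAut.conj a).toMonoidHom = K.map (MulAut.conj b).toMonoidHom
      ↔ b⁻¹ * a ∈ normalizer (K : Set G) := by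
  rw [mem_normalizer_iff_map_conj_eq,
    ← (map_injective (f := (MulAut.conj b⁻¹).toMonoidHom) (MulAut.conj b⁻¹).injective).eq_iff,
    ← map_conj_mul, ← map_conj_mul, inv_mul_cancel, map_conj_one]
  rfl

theorem le_map_conj_iff (H K : Subgroup G) (x : G) :
    K ≤ H.map (MulAut.conj x).toMonoidHom ↔ K.map (MulAut.conj x⁻¹).toMonoidHom ≤ H := by
  rw [← map_le_map_iff_of_injective (f := (MulAut.conj x⁻¹).toMonoidHom)
    (MulAut.conj x⁻¹).injective, ← map_conj_mul, inv_mul_cancel, map_conj_one]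

end Subgroup

/-- If the subgroups `B^{gᵢ}` (here `X^g = g⁻¹Xg`) meet every `N_G(A)`-class of
conjugates of `B` contained in `A`, then the subgroups `A^{gᵢ⁻¹}` meet every
`N_G(B)`-class of conjugates of `A` containing `B`. -/
theorem stmt14 {G : Type*} [Group G] (A B : Subgroup G) {ι : Type*} (g : ι → G)
    (hyp : ∀ x : G, B.map (MulAut.conj x⁻¹).toMonoidHom ≤ A →
      ∃ i, ∃ n ∈ Subgroup.normalizer (A : Set G),
        B.map (MulAut.conj (x * n)⁻¹).toMonoidHom = B.map (MulAut.conj (g i)⁻¹).toMonoidHom) :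
    ∀ x : G, B ≤ A.map (MulAut.conj x⁻¹).toMonoidHom →
      ∃ i, ∃ m ∈ Subgroup.normalizer (B : Set G),
        A.map (MulAut.conj (x * m)⁻¹).toMonoidHom
          = A.map (MulAut.conj ((g i)⁻¹)⁻¹).toMonoidHom := by
  intro x hx
  obtain ⟨i, n, hn, hB⟩ := hyp x⁻¹ ((Subgroup.le_map_conj_iff A B x⁻¹).1 hx)
  have hm : (g i * n⁻¹ * x)⁻¹ ∈ Subgroup.normalizer (B : Set G) := by
    rw [Subgroup.map_conj_eq_map_conj_iff] at hB
    exact inv_mem (by simpa [mul_assoc] using hB)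
  refine ⟨i, _, hm, (Subgroup.map_conj_eq_map_conj_iff A _ _).2 ?_⟩
  simpa [mul_assoc] using inv_mem hn
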